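/- If the term-rewriting system Π_S is confluent, then every operated congruence class A of ⟨S⟩ contains exactly one irreducible element: |A ∩ Irr(S)| = 1. -/
import Mathlib


namespace OpMon

/-- Letters of bracketed words: either a variable or a bracketed word. -/
inductive Letter (X : Type) : Type
  | of : X → Letter X
  | br : List (Letter X) → Letter X

/-- The free operated monoid `𝔐(X)`, modeled as lists of letters (free monoid on letters). -/
abbrev M (X : Type) := List (Letter X)

/-- The operator `⌊ ⌋` on `𝔐(X)`. -/
def L {X : Type} (w : M X) : M X := [Letter.br w]

mutual
  /-- Substitute each variable by a word (letter version). -/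
  def bindL {Y Z : Type} : Letter Y → (Y → M Z) → M Z
    | .of y, f => f y
    | .br w, f => [.br (bindW w f)]
  /-- Substitute each variable by a word (word version). -/
  def bindW {Y Z : Type} : M Y → (Y → M Z) → M Z
    | [], _ => []
    | a :: as, f => bindL a f ++ bindW as f
end

mutual
  /-- Count occurrences of variables satisfying `p` (letter version). -/
  def cntL {Y : Type} (p : Y → Bool) : Letter Y → ℕ
    | .of y => if p y then 1 else 0
    | .br w => cntW p w
  /-- Count occurrences of variables satisfying `p` (word version). -/
  def cntW {Y : Type} (p : Y → Bool) : M Y → ℕ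
    | [] => 0
    | a :: as => cntL p a + cntW p as
end

/-- The star letter `⋆`, modeled as `none`. -/
def starW {X : Type} : M (Option X) := [Letter.of none]

/-- `q` is a `⋆`-bracketed word: exactly one occurrence of `⋆`. -/
def IsStar {X : Type} (q : M (Option X)) : Prop :=
  cntW (fun o => o.isNone) q = 1

/-- Substitution `q|_u` of `u` for `⋆`. -/
def sub {X : Type} (q : M (Option X)) (u : M X) : M X :=
  bindW q (fun o => Option.elim o u (fun x => [Letter.of x]))

/-- Embed `𝔐(X)` into `𝔐(X ∪ {⋆})`. -/
def emb {X : Type} (w : M X) : M (Option X) :=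
  bindW w (fun x => [Letter.of (some x)])

/-- Substitute a `⋆`-word `r` for the `⋆` of `q`, yielding a word on `X ∪ {⋆}`. -/
def subS {X : Type} (q r : M (Option X)) : M (Option X) :=
  bindW q (fun o => Option.elim o r (fun x => [Letter.of (some x)]))

/-- `p` is a `(⋆₁,⋆₂)`-bracketed word (⋆₁ = `none`, ⋆₂ = `some none`). -/
def IsStar2 {X : Type} (p : M (Option (Option X))) : Prop :=
  cntW (fun o => o.isNone) p = 1 ∧
  cntW (fun o => match o with | some none => true | _ => false) p = 1

/-- Substitution `p|_{u₁,u₂}`. -/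
def sub2 {X : Type} (p : M (Option (Option X))) (u₁ u₂ : M X) : M X :=
  bindW p (fun o => match o with
    | none => u₁
    | some none => u₂
    | some (some x) => [Letter.of x])

/-- Substitution `p|_{u₁,⋆₂}`, a `⋆`-word. -/
def sub2L {X : Type} (p : M (Option (Option X))) (u₁ : M X) : M (Option X) :=
  bindW p (fun o => match o with
    | none => emb u₁
    | some none => [Letter.of none]
    | some (some x) => [Letter.of (some x)])

/-- Substitution `p|_{⋆₁,u₂}`, a `⋆`-word. -/
def sub2R {X : Type} (p : M (Option (Option X))) (u₂ : M X) : M (Option X) :=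
  bindW p (fun o => match o with
    | none => [Letter.of none]
    | some none => emb u₂
    | some (some x) => [Letter.of (some x)])

/-- `R^c`. -/
def Rc {X : Type} (R : Set (M X × M X)) : Set (M X × M X) :=
  {p | ∃ q a b, IsStar q ∧ (a, b) ∈ R ∧ p = (sub q a, sub q b)}

/-- Inverse relation `R⁻¹`. -/
def relInv {X : Type} (R : Set (M X × M X)) : Set (M X × M X) :=
  {p | (p.2, p.1) ∈ R}

/-- Closure under right mult. (C1), left mult. (C2), and the operator (C3). -/
def Closed {X : Type} (S : Set (M X × M X)) : Prop :=
  ∀ a b, (a, b) ∈ S → ∀ c : M X,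
    (a ++ c, b ++ c) ∈ S ∧ (c ++ a, c ++ b) ∈ S ∧ (L a, L b) ∈ S

/-- Composition of relations. -/
def relComp {X : Type} (R S : Set (M X × M X)) : Set (M X × M X) :=
  {p | ∃ c, (p.1, c) ∈ R ∧ (c, p.2) ∈ S}

/-- `relPow R n = R^(n+1)`. -/
def relPow {X : Type} (R : Set (M X × M X)) : ℕ → Set (M X × M X)
  | 0 => R
  | n + 1 => relComp (relPow R n) R

/-- Operated congruence. -/
def IsOpCong {X : Type} (T : Set (M X × M X)) : Prop :=
  (∀ a, (a, a) ∈ T) ∧ (∀ a b, (a, b) ∈ T → (b, a) ∈ T) ∧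
  (∀ a b c, (a, b) ∈ T → (b, c) ∈ T → (a, c) ∈ T) ∧ Closed T

/-- The operated congruence `⟨R⟩` generated by `R`. -/
def ocong {X : Type} (R : Set (M X × M X)) : Set (M X × M X) :=
  ⋂₀ {T | IsOpCong T ∧ R ⊆ T}

/-- Equivalence relation (as a set of pairs). -/
def IsEqv {X : Type} (T : Set (M X × M X)) : Prop :=
  (∀ a, (a, a) ∈ T) ∧ (∀ a b, (a, b) ∈ T → (b, a) ∈ T) ∧
  (∀ a b c, (a, b) ∈ T → (b, c) ∈ T → (a, c) ∈ T)

/-- The equivalence `T^e` generated by `T`. -/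
def eqgen {X : Type} (T : Set (M X × M X)) : Set (M X × M X) :=
  ⋂₀ {E | IsEqv E ∧ T ⊆ E}

/-- A monomial order: a well-founded linear order compatible with the operations. -/
def IsMonomialOrder {X : Type} (lt : M X → M X → Prop) : Prop :=
  WellFounded lt ∧
  (∀ a b, a = b ∨ lt a b ∨ lt b a) ∧
  (∀ a b c, lt a b → lt b c → lt a c) ∧
  (∀ u v w, lt u v → lt (u ++ w) (v ++ w) ∧ lt (w ++ u) (w ++ v) ∧ lt (L u) (L v))

/-- The term-rewriting system `Π_S`. -/
def PiS {X : Type} (lt : M X → M X → Prop) (S : Set (M X × M X)) : Set (M X × M X) :=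
  {p | ∃ q t v, IsStar q ∧ ((t, v) ∈ S ∨ (v, t) ∈ S) ∧ lt v t ∧ p = (sub q t, sub q v)}

/-- One-step rewriting. -/
def Rew {X : Type} (lt : M X → M X → Prop) (S : Set (M X × M X)) (a b : M X) : Prop :=
  (a, b) ∈ PiS lt S

/-- Joinability under `Π_S`. -/
def Joinable {X : Type} (lt : M X → M X → Prop) (S : Set (M X × M X)) (f g : M X) : Prop :=
  ∃ h, Relation.ReflTransGen (Rew lt S) f h ∧ Relation.ReflTransGen (Rew lt S) g h

/-- Termination of `Π_S`. -/
def Terminating {X : Type} (lt : M X → M X → Prop) (S : Set (M X × M X)) : Prop :=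
  ¬ ∃ f : ℕ → M X, ∀ n, Rew lt S (f n) (f (n + 1))

/-- Confluence of `Π_S`. -/
def Confluent {X : Type} (lt : M X → M X → Prop) (S : Set (M X × M X)) : Prop :=
  ∀ f g h, Relation.ReflTransGen (Rew lt S) f g → Relation.ReflTransGen (Rew lt S) f h →
    Joinable lt S g h

/-- Irreducible elements: `𝔐(X) \ Dom(Π_S)`. -/
def Irr {X : Type} (lt : M X → M X → Prop) (S : Set (M X × M X)) : Set (M X) :=
  {f | ∀ g, ¬ Rew lt S f g}

/-- Predecessors of `a`. -/
def Pre {X : Type} (lt : M X → M X → Prop) (S : Set (M X × M X)) (a : M X) : Set (M X) :=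
  {f | Relation.ReflTransGen (Rew lt S) f a}

/-- `W` is a section of `⟨S⟩`: every congruence class meets `W` in exactly one element. -/
def IsSection {X : Type} (S : Set (M X × M X)) (W : Set (M X)) : Prop :=
  ∀ a : M X, ∃! w, w ∈ W ∧ (a, w) ∈ ocong S

/-- Separated placements `(u₁,q₁)`, `(u₂,q₂)` in `w`. -/
def Separated {X : Type} (u₁ : M X) (q₁ : M (Option X)) (u₂ : M X) (q₂ : M (Option X))
    (w : M X) : Prop :=
  ∃ p, IsStar2 p ∧ q₁ = sub2R p u₂ ∧ q₂ = sub2L p u₁ ∧ w = sub2 p u₁ u₂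

/-- Nested placements: one context is a subcontext of the other. -/
def Nested {X : Type} (q₁ q₂ : M (Option X)) : Prop :=
  ∃ q, IsStar q ∧ (q₂ = subS q₁ q ∨ q₁ = subS q₂ q)

/-- Intersecting placements `(u₁,q₁)`, `(u₂,q₂)` in `w`. -/
def Intersecting {X : Type} (w u₁ : M X) (q₁ : M (Option X)) (u₂ : M X)
    (q₂ : M (Option X)) : Prop :=
  ∃ q a b c, IsStar q ∧ a ≠ ([] : M X) ∧ b ≠ ([] : M X) ∧ c ≠ ([] : M X) ∧
    w = sub q (a ++ b ++ c) ∧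
    ((q₁ = subS q (starW ++ emb c) ∧ q₂ = subS q (emb a ++ starW)) ∨
     (q₁ = subS q (emb a ++ starW) ∧ q₂ = subS q (starW ++ emb c)))

/-- Defining relations of the free `∗`-monoid. -/
def SStar (X : Type) : Set (M X × M X) :=
  {p | (∃ w : M X, p = (L (L w), w)) ∨
       (∃ u v : M X, u ≠ [] ∧ v ≠ [] ∧ p = (L (u ++ v), L v ++ L u)) ∨
       p = (L [], [])}

/-- Defining relations of the free group. -/
def SGrp (X : Type) : Set (M X × M X) :=
  {p | (∃ w : M X, p = (L (L w), w)) ∨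
       (∃ u v : M X, u ≠ [] ∧ v ≠ [] ∧ p = (L (u ++ v), L v ++ L u)) ∨
       (∃ w : M X, p = (L w ++ w, [])) ∨
       (∃ w : M X, p = (w ++ L w, []))}


section Aux

theorem bindW_nil {Y Z : Type} (F : Y → M Z) : bindW ([] : M Y) F = [] := rfl
theorem bindW_cons {Y Z : Type} (a : Letter Y) (as : M Y) (F : Y → M Z) :
    bindW (a :: as) F = bindL a F ++ bindW as F := rfl
theorem cntW_nil {Y : Type} (p : Y → Bool) : cntW p ([] : M Y) = 0 := rfl
theorem cntW_cons {Y : Type} (p : Y → Bool) (a : Letter Y) (as : M Y) :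
    cntW p (a :: as) = cntL p a + cntW p as := rfl

theorem bindW_append {Y Z : Type} (x y : M Y) (F : Y → M Z) :
    bindW (x ++ y) F = bindW x F ++ bindW y F := by
  induction x with
  | nil => rfl
  | cons a as ih => simp [bindW_cons, ih]

theorem cntW_append {Y : Type} (p : Y → Bool) (x y : M Y) :
    cntW p (x ++ y) = cntW p x + cntW p y := by
  induction x with
  | nil => simp [cntW_nil]
  | cons a as ih => simp [cntW_cons, ih]; omega

mutual
theorem bindL_congr {Y Z : Type} (p : Y → Bool) (F G : Y → M Z)
    (h : ∀ y, p y = false → F y = G y) :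
    ∀ a : Letter Y, cntL p a = 0 → bindL a F = bindL a G
  | .of y, hc => by
    simp [cntL] at hc
    simp [bindL, h y (by simpa using hc)]
  | .br w, hc => by
    simp [cntL] at hc
    simp [bindL, bindW_congr p F G h w hc]
theorem bindW_congr {Y Z : Type} (p : Y → Bool) (F G : Y → M Z)
    (h : ∀ y, p y = false → F y = G y) :
    ∀ w : M Y, cntW p w = 0 → bindW w F = bindW w G
  | [], _ => rfl
  | a :: as, hc => by
    simp [cntW_cons] at hc
    simp [bindW_cons, bindL_congr p F G h a hc.1, bindW_congr p F G h as hc.2]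
end

end Aux
section Aux2

mutual
theorem bindL_emb {X : Type} (G : Option X → M X) (hG : ∀ x, G (some x) = [Letter.of x]) :
    ∀ a : Letter X, bindW (bindL a (fun x => [Letter.of (some x)])) G = [a]
  | .of y => by simp [bindL, bindW_cons, bindW_nil, hG]
  | .br w => by simp [bindL, bindW_cons, bindW_nil, bindW_emb G hG w]
theorem bindW_emb {X : Type} (G : Option X → M X) (hG : ∀ x, G (some x) = [Letter.of x]) :
    ∀ w : M X, bindW (bindW w (fun x => [Letter.of (some x)])) G = w
  | [] => rfl
  | a :: as => by
    simp [bindW_cons, bindW_append, bindL_emb G hG a, bindW_emb G hG as]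
end

theorem sub_emb {X : Type} (u : M X) (w : M X) : sub (emb w) u = w := by
  simpa [sub, emb] using bindW_emb _ (fun x => rfl) w

mutual
theorem cntL_emb {X : Type} (p : Option X → Bool) (hp : ∀ x, p (some x) = false) :
    ∀ a : Letter X, cntW p (bindL a (fun x => [Letter.of (some x)])) = 0
  | .of y => by simp [bindL, cntW_cons, cntW_nil, cntL, hp]
  | .br w => by simp [bindL, cntW_cons, cntW_nil, cntL, cntW_emb p hp w]
theorem cntW_emb {X : Type} (p : Option X → Bool) (hp : ∀ x, p (some x) = false) :
    ∀ w : M X, cntW p (bindW w (fun x => [Letter.of (some x)])) = 0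
  | [] => rfl
  | a :: as => by
    simp [bindW_cons, cntW_append, cntL_emb p hp a, cntW_emb p hp as]
end

theorem cnt_emb {X : Type} (w : M X) : cntW (fun o => o.isNone) (emb w) = 0 :=
  cntW_emb _ (fun _ => rfl) w

-- monotonicity
mutual
theorem lt_bindL {Y Z : Type} (lt : M Z → M Z → Prop) (hm : IsMonomialOrder lt)
    (p : Y → Bool) (F G : Y → M Z)
    (hagree : ∀ y, p y = false → F y = G y) (hlt : ∀ y, p y = true → lt (F y) (G y)) :
    ∀ a : Letter Y, cntL p a = 1 → lt (bindL a F) (bindL a G)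
  | .of y, hc => by
    simp only [cntL] at hc
    have hy : p y = true := by by_contra h; simp [eq_false_of_ne_true h] at hc
    simpa [bindL] using hlt y hy
  | .br w, hc => by
    simp only [cntL] at hc
    have := lt_bindW lt hm p F G hagree hlt w hc
    simpa [bindL, L] using (hm.2.2.2 _ _ [] this).2.2
theorem lt_bindW {Y Z : Type} (lt : M Z → M Z → Prop) (hm : IsMonomialOrder lt)
    (p : Y → Bool) (F G : Y → M Z)
    (hagree : ∀ y, p y = false → F y = G y) (hlt : ∀ y, p y = true → lt (F y) (G y)) :
    ∀ w : M Y, cntW p w = 1 → lt (bindW w F) (bindW w G)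
  | a :: as, hc => by
    simp only [cntW_cons] at hc
    rcases Nat.eq_zero_or_pos (cntL p a) with h0 | h1
    · have has : cntW p as = 1 := by omega
      have heq : bindL a F = bindL a G := bindL_congr p F G hagree a h0
      have := (hm.2.2.2 _ _ (bindL a G) (lt_bindW lt hm p F G hagree hlt as has)).2.1
      simpa [bindW_cons, heq] using this
    · have ha : cntL p a = 1 := by omega
      have has : cntW p as = 0 := by omega
      have heq : bindW as F = bindW as G := bindW_congr p F G hagree as has
      have := (hm.2.2.2 _ _ (bindW as G) (lt_bindL lt hm p F G hagree hlt a ha)).1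
      simpa [bindW_cons, heq] using this
end

-- opcong membership
mutual
theorem mem_bindL {X : Type} (T : Set (M X × M X)) (hT : IsOpCong T)
    {Y : Type} (F G : Y → M X) (hmem : ∀ y, (F y, G y) ∈ T) :
    ∀ a : Letter Y, (bindL a F, bindL a G) ∈ T
  | .of y => by simpa [bindL] using hmem y
  | .br w => by
    have := (hT.2.2.2 _ _ (mem_bindW T hT F G hmem w) []).2.2
    simpa [bindL, L] using this
theorem mem_bindW {X : Type} (T : Set (M X × M X)) (hT : IsOpCong T)
    {Y : Type} (F G : Y → M X) (hmem : ∀ y, (F y, G y) ∈ T) :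
    ∀ w : M Y, (bindW w F, bindW w G) ∈ T
  | [] => hT.1 []
  | a :: as => by
    have h1 := (hT.2.2.2 _ _ (mem_bindL T hT F G hmem a) (bindW as F)).1
    have h2 := (hT.2.2.2 _ _ (mem_bindW T hT F G hmem as) (bindL a G)).2.1
    exact hT.2.2.1 _ _ _ h1 h2
end

end Aux2
section Aux3

theorem sub_starW {X : Type} (u : M X) : sub starW u = u := by
  simp [sub, starW, bindW_cons, bindW_nil, bindL, Option.elim]

theorem sub_append {X : Type} (q r : M (Option X)) (u : M X) :
    sub (q ++ r) u = sub q u ++ sub r u := by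
  simp [sub, bindW_append]

theorem isStar_append_emb {X : Type} {q : M (Option X)} (hq : IsStar q) (c : M X) :
    IsStar (q ++ emb c) := by
  unfold IsStar at hq ⊢; simp [cntW_append, cnt_emb, hq]

theorem isStar_emb_append {X : Type} {q : M (Option X)} (hq : IsStar q) (c : M X) :
    IsStar (emb c ++ q) := by
  unfold IsStar at hq ⊢; simp [cntW_append, cnt_emb, hq]

theorem isStar_L {X : Type} {q : M (Option X)} (hq : IsStar q) : IsStar (L q) := by
  simpa [IsStar, L, cntW_cons, cntW_nil, cntL] using hq

theorem sub_L {X : Type} (q : M (Option X)) (u : M X) : sub (L q) u = L (sub q u) := by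
  simp [sub, L, bindW_cons, bindW_nil, bindL]

theorem rew_lt {X : Type} {lt : M X → M X → Prop} (hm : IsMonomialOrder lt)
    {S : Set (M X × M X)} {f g : M X} (h : Rew lt S f g) : lt g f := by
  obtain ⟨q, t, v, hq, _, hvt, heq⟩ := h
  have h1 : f = sub q t := congrArg Prod.fst heq
  have h2 : g = sub q v := congrArg Prod.snd heq
  subst h1; subst h2
  exact lt_bindW lt hm (fun o => o.isNone) _ _
    (fun y hy => by cases y <;> simp_all)
    (fun y hy => by cases y <;> simp_all [Option.elim]) q (by unfold IsStar at hq; exact hq)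

theorem isOpCong_ocong {X : Type} (S : Set (M X × M X)) : IsOpCong (ocong S) := by
  refine ⟨fun a T hT => hT.1.1 a, fun a b h T hT => hT.1.2.1 a b (h T hT),
    fun a b c h1 h2 T hT => hT.1.2.2.1 a b c (h1 T hT) (h2 T hT),
    fun a b h c => ⟨fun T hT => (hT.1.2.2.2 a b (h T hT) c).1,
      fun T hT => (hT.1.2.2.2 a b (h T hT) c).2.1,
      fun T hT => (hT.1.2.2.2 a b (h T hT) c).2.2⟩⟩

theorem subset_ocong {X : Type} (S : Set (M X × M X)) : S ⊆ ocong S :=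
  fun p hp T hT => hT.2 hp

theorem ocong_min {X : Type} {S T : Set (M X × M X)} (hT : IsOpCong T) (hST : S ⊆ T) :
    ocong S ⊆ T := fun p hp => hp T ⟨hT, hST⟩

theorem rew_mem_ocong {X : Type} {lt : M X → M X → Prop} {S : Set (M X × M X)}
    {f g : M X} (h : Rew lt S f g) : (f, g) ∈ ocong S := by
  obtain ⟨q, t, v, hq, hS, hvt, heq⟩ := h
  have h1 : f = sub q t := congrArg Prod.fst heq
  have h2 : g = sub q v := congrArg Prod.snd heq
  subst h1; subst h2
  have hoc := isOpCong_ocong S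
  have htv : (t, v) ∈ ocong S := by
    rcases hS with h | h
    · exact subset_ocong S h
    · exact hoc.2.1 _ _ (subset_ocong S h)
  exact mem_bindW _ hoc _ _
    (fun y => by cases y <;> simp [Option.elim, hoc.1, htv]) q

theorem rew_append_right {X : Type} {lt : M X → M X → Prop} (hm : IsMonomialOrder lt)
    {S : Set (M X × M X)} {f g : M X} (h : Rew lt S f g) (c : M X) :
    Rew lt S (f ++ c) (g ++ c) := by
  obtain ⟨q, t, v, hq, hS, hvt, heq⟩ := h
  have h1 : f = sub q t := congrArg Prod.fst heq
  have h2 : g = sub q v := congrArg Prod.snd heq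
  subst h1; subst h2
  exact ⟨q ++ emb c, t, v, isStar_append_emb hq c, hS, hvt, by
    simp [sub_append, sub_emb]⟩

theorem rew_append_left {X : Type} {lt : M X → M X → Prop} (hm : IsMonomialOrder lt)
    {S : Set (M X × M X)} {f g : M X} (h : Rew lt S f g) (c : M X) :
    Rew lt S (c ++ f) (c ++ g) := by
  obtain ⟨q, t, v, hq, hS, hvt, heq⟩ := h
  have h1 : f = sub q t := congrArg Prod.fst heq
  have h2 : g = sub q v := congrArg Prod.snd heq
  subst h1; subst h2
  exact ⟨emb c ++ q, t, v, isStar_emb_append hq c, hS, hvt, by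
    simp [sub_append, sub_emb]⟩

theorem rew_L {X : Type} {lt : M X → M X → Prop} (hm : IsMonomialOrder lt)
    {S : Set (M X × M X)} {f g : M X} (h : Rew lt S f g) :
    Rew lt S (L f) (L g) := by
  obtain ⟨q, t, v, hq, hS, hvt, heq⟩ := h
  have h1 : f = sub q t := congrArg Prod.fst heq
  have h2 : g = sub q v := congrArg Prod.snd heq
  subst h1; subst h2
  exact ⟨L q, t, v, isStar_L hq, hS, hvt, by simp [sub_L]⟩

end Aux3
section Aux4

open Relation

theorem rtg_append_right {X : Type} {lt : M X → M X → Prop} (hm : IsMonomialOrder lt)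
    {S : Set (M X × M X)} {f g : M X} (h : ReflTransGen (Rew lt S) f g) (c : M X) :
    ReflTransGen (Rew lt S) (f ++ c) (g ++ c) := by
  induction h with
  | refl => exact ReflTransGen.refl
  | tail _ hstep ih => exact ih.tail (rew_append_right hm hstep c)

theorem rtg_append_left {X : Type} {lt : M X → M X → Prop} (hm : IsMonomialOrder lt)
    {S : Set (M X × M X)} {f g : M X} (h : ReflTransGen (Rew lt S) f g) (c : M X) :
    ReflTransGen (Rew lt S) (c ++ f) (c ++ g) := by
  induction h with
  | refl => exact ReflTransGen.refl
  | tail _ hstep ih => exact ih.tail (rew_append_left hm hstep c)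

theorem rtg_L {X : Type} {lt : M X → M X → Prop} (hm : IsMonomialOrder lt)
    {S : Set (M X × M X)} {f g : M X} (h : ReflTransGen (Rew lt S) f g) :
    ReflTransGen (Rew lt S) (L f) (L g) := by
  induction h with
  | refl => exact ReflTransGen.refl
  | tail _ hstep ih => exact ih.tail (rew_L hm hstep)

theorem joinable_isOpCong {X : Type} {lt : M X → M X → Prop} (hm : IsMonomialOrder lt)
    {S : Set (M X × M X)} (hconf : Confluent lt S) :
    IsOpCong {p : M X × M X | Joinable lt S p.1 p.2} := by
  refine ⟨fun a => ⟨a, ReflTransGen.refl, ReflTransGen.refl⟩,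
    fun a b ⟨k, h1, h2⟩ => ⟨k, h2, h1⟩, ?_, ?_⟩
  · rintro a b c ⟨k1, ha, hb⟩ ⟨k2, hb', hc⟩
    obtain ⟨k, h1, h2⟩ := hconf b k1 k2 hb hb'
    exact ⟨k, ha.trans h1, hc.trans h2⟩
  · rintro a b ⟨k, ha, hb⟩ c
    exact ⟨⟨k ++ c, rtg_append_right hm ha c, rtg_append_right hm hb c⟩,
      ⟨c ++ k, rtg_append_left hm ha c, rtg_append_left hm hb c⟩,
      ⟨L k, rtg_L hm ha, rtg_L hm hb⟩⟩

theorem S_subset_joinable {X : Type} {lt : M X → M X → Prop} (hm : IsMonomialOrder lt)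
    {S : Set (M X × M X)} :
    S ⊆ {p : M X × M X | Joinable lt S p.1 p.2} := by
  rintro ⟨t, v⟩ htv
  rcases hm.2.1 t v with heq | hlt | hlt
  · exact heq ▸ ⟨t, ReflTransGen.refl, ReflTransGen.refl⟩
  · -- lt t v : rewrite v → t
    refine ⟨t, ReflTransGen.refl, ReflTransGen.single ?_⟩
    exact ⟨starW, v, t, by simp [IsStar, starW, cntW_cons, cntW_nil, cntL],
      Or.inr htv, hlt, by simp [sub_starW]⟩
  · refine ⟨v, ReflTransGen.single ?_, ReflTransGen.refl⟩
    exact ⟨starW, t, v, by simp [IsStar, starW, cntW_cons, cntW_nil, cntL],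
      Or.inl htv, hlt, by simp [sub_starW]⟩

theorem ocong_subset_joinable {X : Type} {lt : M X → M X → Prop} (hm : IsMonomialOrder lt)
    {S : Set (M X × M X)} (hconf : Confluent lt S) {a b : M X}
    (h : (a, b) ∈ ocong S) : Joinable lt S a b :=
  ocong_min (joinable_isOpCong hm hconf) (S_subset_joinable hm) h

theorem exists_nf {X : Type} {lt : M X → M X → Prop} (hm : IsMonomialOrder lt)
    (S : Set (M X × M X)) (a : M X) :
    ∃ c, ReflTransGen (Rew lt S) a c ∧ c ∈ Irr lt S := by
  induction a using WellFounded.induction hm.1 with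
  | _ a ih =>
    by_cases h : ∃ g, Rew lt S a g
    · obtain ⟨g, hg⟩ := h
      obtain ⟨c, hc1, hc2⟩ := ih g (rew_lt hm hg)
      exact ⟨c, ReflTransGen.head hg hc1, hc2⟩
    · exact ⟨a, ReflTransGen.refl, fun g hg => h ⟨g, hg⟩⟩

theorem irr_rtg_eq {X : Type} {lt : M X → M X → Prop} {S : Set (M X × M X)}
    {a k : M X} (ha : a ∈ Irr lt S) (h : ReflTransGen (Rew lt S) a k) : a = k := by
  rcases h.cases_head with h | ⟨b, hab, _⟩
  · exact h
  · exact absurd hab (ha b)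

theorem rtg_mem_ocong {X : Type} {lt : M X → M X → Prop} {S : Set (M X × M X)}
    {a b : M X} (h : ReflTransGen (Rew lt S) a b) : (a, b) ∈ ocong S := by
  induction h with
  | refl => exact (isOpCong_ocong S).1 _
  | tail _ hstep ih => exact (isOpCong_ocong S).2.2.1 _ _ _ ih (rew_mem_ocong hstep)

end Aux4
/-- if `Π_S` is confluent, every congruence class contains exactly one
irreducible element. -/
theorem confluent_unique_irr (X : Type) (lt : M X → M X → Prop)
    (hlt : IsMonomialOrder lt) (S : Set (M X × M X))
    (hconf : Confluent lt S) (a₀ : M X) :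
    ∃! a, a ∈ {b | (a₀, b) ∈ ocong S} ∩ Irr lt S := by
  obtain ⟨c, hc1, hc2⟩ := exists_nf hlt S a₀
  have hoc := isOpCong_ocong S
  refine ⟨c, ⟨rtg_mem_ocong hc1, hc2⟩, ?_⟩
  rintro b ⟨hb1, hb2⟩
  have hbc : (b, c) ∈ ocong S :=
    hoc.2.2.1 _ _ _ (hoc.2.1 _ _ hb1) (rtg_mem_ocong hc1)
  obtain ⟨k, hk1, hk2⟩ := ocong_subset_joinable hlt hconf hbc
  rw [irr_rtg_eq hb2 hk1, ← irr_rtg_eq hc2 hk2]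

end OpMon
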